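/- For every (ρ₁,ρ₂) in the open triangle T, the determinant of the Hessian matrix of the surface tension σ equals π², i.e., σ₁₁σ₂₂ - σ₁₂² = π². -/
import Mathlib


open Real

/-- The determinant of the Hessian of the surface tension is identically `π²` on the
open triangle `T`. -/
theorem surfTen_hessian_det (ρ₁ ρ₂ : ℝ) (h1 : 0 < ρ₁) (h2 : 0 < ρ₂) (h12 : ρ₁ + ρ₂ < 1) :
    (π * Real.cot (π * ρ₁) + π * Real.cot (π * (1 - ρ₁ - ρ₂)))
        * (π * Real.cot (π * ρ₂) + π * Real.cot (π * (1 - ρ₁ - ρ₂)))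
      - (π * Real.cot (π * (1 - ρ₁ - ρ₂))) ^ 2 = π ^ 2 := by
  have hπ := Real.pi_pos
  have hsa : Real.sin (π * ρ₁) ≠ 0 :=
    ne_of_gt (Real.sin_pos_of_pos_of_lt_pi (by positivity) (by nlinarith))
  have hsb : Real.sin (π * ρ₂) ≠ 0 :=
    ne_of_gt (Real.sin_pos_of_pos_of_lt_pi (by positivity) (by nlinarith))
  have hsab : Real.sin (π * ρ₁ + π * ρ₂) ≠ 0 :=
    ne_of_gt (Real.sin_pos_of_pos_of_lt_pi (by positivity) (by nlinarith))
  have hc : π * (1 - ρ₁ - ρ₂) = π - (π * ρ₁ + π * ρ₂) := by ring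
  rw [hc]
  simp only [Real.cot_eq_cos_div_sin, Real.sin_pi_sub, Real.cos_pi_sub, Real.sin_add,
    Real.cos_add]
  have h1' := Real.sin_sq_add_cos_sq (π * ρ₁)
  have h2' := Real.sin_sq_add_cos_sq (π * ρ₂)
  rw [Real.sin_add] at hsab
  field_simp
  nlinarith [sq_nonneg π, sq_nonneg (Real.sin (π*ρ₁)), sq_nonneg (Real.sin (π*ρ₂))]
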